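/- Let d : ℤ² → ZMod 2 be any design and let P : ℤ² → ZMod 2 be its thin-striping pattern, P(x, y) = y (mod 2) if x + y is even and P(x, y) = y + d(x, y) (mod 2) if x + y is odd. Suppose γ(x, y) = (y + a, x + b) with a ≡ b (mod 2) satisfies d(γ(x, y)) = d(x, y) + 1 for all (x, y). Then P(γ(x, y)) = P(x, y) + b (mod 2) for all (x, y); i.e., γ is a colour-preserving symmetry of P when b is even and a colour-reversing symmetry when b is odd. -/
import Mathlib


theorem glide_reflection_colour_symmetry (d : ℤ → ℤ → ZMod 2) (a b : ℤ)
    (hab : a ≡ b [ZMOD 2])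
    (P : ℤ → ℤ → ZMod 2)
    (hP : ∀ x y : ℤ, P x y =
      if Even (x + y) then (y : ZMod 2) else (y : ZMod 2) + d x y)
    (hd : ∀ x y : ℤ, d (y + a) (x + b) = d x y + 1) :
    ∀ x y : ℤ, P (y + a) (x + b) = P x y + (b : ZMod 2) := by
  intro x y
  have h2 : a % 2 = b % 2 := hab
  have hpar : Even (y + a + (x + b)) ↔ Even (x + y) := by
    simp only [Int.even_iff]
    omega
  rw [hP, hP]
  by_cases h : Even (x + y)
  · rw [if_pos h, if_pos (hpar.2 h)]
    have hx : (x : ZMod 2) = (y : ZMod 2) := by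
      have := Int.even_iff.1 h
      have : x % 2 = y % 2 := by omega
      exact (ZMod.intCast_eq_intCast_iff' x y 2).2 (by simpa [Int.ModEq] using this)
    push_cast
    rw [hx]
  · rw [if_neg h, if_neg (fun hc => h (hpar.1 hc)), hd]
    have hx : (x : ZMod 2) + 1 = (y : ZMod 2) := by
      have hodd : Odd (x + y) := Int.not_even_iff_odd.1 h
      have h1 : (x + y) % 2 = 1 := Int.odd_iff.1 hodd
      have : (x + 1) % 2 = y % 2 := by omega
      have := (ZMod.intCast_eq_intCast_iff' (x + 1) y 2).2 (by simpa [Int.ModEq] using this)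
      push_cast at this
      exact this
    push_cast
    rw [← hx]
    ring
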